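/- arXiv:1207.6295 — 3 statements merged into one kernel-verified Lean document; each statement's English description precedes it below -/
import Mathlib

section
/- Fix λ > 0. Define K(D̄, ε̄) = -log(ε̄)/(λD̄) and C(D̄, ε̄) = λ·K(D̄,ε̄)/log(1 + K(D̄,ε̄)) for D̄ > 0 and ε̄ ∈ (0,1). Then C is nonincreasing in D̄ (for fixed ε̄) and nonincreasing in ε̄ (for fixed D̄). -/
/-!
`C = λ · g(K)` with `g(x) = x / log (1 + x)` and `K = -log ε̄ / (λ D̄) > 0`. Since `log` is concave,
the secant slope `log (1 + x) / x` through `(1, log 1)` decreases in `x`, so `g` increases on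
`(0, ∞)`; and `K` decreases both in `D̄` and in `ε̄`.
-/

open Real Set

lemma log_one_add_div_self_antitoneOn : AntitoneOn (fun x : ℝ => log (1 + x) / x) (Ioi 0) := by
  intro x hx y hy hxy
  have hx' : (0 : ℝ) < x := hx
  have hy' : (0 : ℝ) < y := hy
  have := strictConcaveOn_log_Ioi.concaveOn.neg.secant_mono (a := 1) (x := 1 + x) (y := 1 + y)
    (by norm_num) (by simp only [mem_Ioi]; linarith) (by simp only [mem_Ioi]; linarith)
    (by linarith) (by linarith) (by linarith)
  simpa [neg_div] using this

lemma div_log_one_add_monotoneOn : MonotoneOn (fun x : ℝ => x / log (1 + x)) (Ioi 0) := by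
  intro x hx y hy hxy
  have hpos : ∀ z ∈ Ioi (0 : ℝ), 0 < log (1 + z) / z := fun z hz =>
    div_pos (log_pos (by simp only [mem_Ioi] at hz; linarith)) hz
  simpa only [inv_div] using
    inv_anti₀ (hpos y hy) (log_one_add_div_self_antitoneOn hx hy hxy)

lemma neg_log_pos_of_mem_Ioo {ε : ℝ} (hε : ε ∈ Ioo (0 : ℝ) 1) : 0 < -log ε :=
  neg_pos.mpr (log_neg hε.1 hε.2)

/-- The Poisson capacity constraint `C(D̄,ε̄) = λK/log(1+K)`, with
`K = -log ε̄/(λD̄)`, is nonincreasing in `D̄` and nonincreasing in `ε̄`. -/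
theorem poisson_capacity_antitone (lam : ℝ) (hlam : 0 < lam) :
    let C : ℝ → ℝ → ℝ := fun D eps =>
      lam * (-Real.log eps / (lam * D)) / Real.log (1 + -Real.log eps / (lam * D))
    (∀ eps ∈ Set.Ioo (0 : ℝ) 1, ∀ D₁ D₂ : ℝ, 0 < D₁ → D₁ ≤ D₂ →
        C D₂ eps ≤ C D₁ eps) ∧
    (∀ D : ℝ, 0 < D → ∀ eps₁ eps₂ : ℝ, eps₁ ∈ Set.Ioo (0 : ℝ) 1 →
        eps₂ ∈ Set.Ioo (0 : ℝ) 1 → eps₁ ≤ eps₂ → C D eps₂ ≤ C D eps₁) := by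
  intro C
  have capacity_mono : ∀ k₁ k₂ : ℝ, 0 < k₁ → k₁ ≤ k₂ →
      lam * k₁ / log (1 + k₁) ≤ lam * k₂ / log (1 + k₂) := fun k₁ k₂ hk₁ hk => by
    simp only [mul_div_assoc]
    exact mul_le_mul_of_nonneg_left
      (div_log_one_add_monotoneOn hk₁ (lt_of_lt_of_le hk₁ hk) hk) hlam.le
  refine ⟨fun eps heps D₁ D₂ hD₁ hD => ?_, fun D hD eps₁ eps₂ heps₁ heps₂ heps => ?_⟩
  · have hlog := neg_log_pos_of_mem_Ioo heps
    have hD₂ : 0 < D₂ := hD₁.trans_le hD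
    exact capacity_mono _ _ (by positivity) (by gcongr)
  · have hlog := neg_log_pos_of_mem_Ioo heps₂
    exact capacity_mono _ _ (by positivity) (by gcongr; exact heps₁.1)
end

section
/- Fix λ > 0, α ∈ (1,2). Let C(D̄, ε̄) > λ be the implicit solution of inf_{1 < γ < C/λ} [γ/(C^{α-1}(C-γλ)) · γ^{(α-1)/α}/log(γ^{(α-1)/α})] = ε̄ D̄^{α-1}. Then as ε̄ D̄^{α-1} → 0, C(D̄, ε̄) = Θ((ε̄ D̄^{α-1})^{-1/α}); i.e., there exist constants 0 < c₁ ≤ c₂ and δ > 0 such that whenever ε̄ D̄^{α-1} ≤ δ, c₁ (ε̄ D̄^{α-1})^{-1/α} ≤ C(D̄, ε̄) ≤ c₂ (ε̄ D̄^{α-1})^{-1/α}. -/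
/-!
Every value of the objective is at least `C^{-α}`, since `γ / (C - γλ) ≥ 1 / C` and
`t / log t ≥ 1` for `t > 1`; so `s := ε̄D̄^{α-1} ≥ C^{-α}`. Conversely, at
`γ₀ = e^{α/(α-1)}` the logarithmic factor equals `e`, and as soon as `C ≥ 2γ₀λ` (which the lower
bound forces once `s` is small) the value there is at most `2eγ₀ C^{-α}`. Hence `s C^α` stays
between `1` and `2eγ₀`.
-/
open Real Set

noncomputable def capacityObjective (lam α C γ : ℝ) : ℝ :=
  γ / (C ^ (α - 1) * (C - γ * lam)) * (γ ^ ((α - 1) / α) / log (γ ^ ((α - 1) / α)))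

lemma one_le_div_log {t : ℝ} (ht : 1 < t) : 1 ≤ t / log t := by
  rw [one_le_div (log_pos ht)]
  linarith [log_le_sub_one_of_pos (zero_lt_one.trans ht)]

lemma inv_rpow_le_capacityObjective {lam α C γ : ℝ} (hlam : 0 ≤ lam) (hα : 1 < α)
    (hγ : 1 < γ) (hγC : γ * lam < C) : (C ^ α)⁻¹ ≤ capacityObjective lam α C γ := by
  have hC : 0 < C := by nlinarith
  have hgap : 0 < C - γ * lam := by linarith
  have hpow : C ^ α = C ^ (α - 1) * C := by
    rw [← rpow_add_one hC.ne']; ring_nf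
  have hfirst : (C ^ α)⁻¹ ≤ γ / (C ^ (α - 1) * (C - γ * lam)) := by
    rw [inv_eq_one_div, div_le_div_iff₀ (by positivity) (by positivity), hpow, one_mul]
    have h : 0 ≤ C ^ (α - 1) := by positivity
    nlinarith [mul_nonneg h (mul_nonneg (by linarith : 0 ≤ γ - 1) hC.le),
      mul_nonneg h (mul_nonneg hlam (by linarith : 0 ≤ γ))]
  have hsecond : 1 ≤ γ ^ ((α - 1) / α) / log (γ ^ ((α - 1) / α)) :=
    one_le_div_log (one_lt_rpow hγ (div_pos (by linarith) (by linarith)))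
  simpa [capacityObjective] using mul_le_mul hfirst hsecond zero_le_one (by positivity)

lemma exp_div_sub_one_rpow {α : ℝ} (hα : 1 < α) :
    exp (α / (α - 1)) ^ ((α - 1) / α) = exp 1 := by
  rw [← exp_mul]
  congr 1
  field_simp [show α - 1 ≠ 0 by linarith, show α ≠ 0 by linarith]

lemma capacityObjective_exp_le {lam α C : ℝ} (hlam : 0 < lam) (hα : 1 < α)
    (hC : 2 * exp (α / (α - 1)) * lam ≤ C) :
    capacityObjective lam α C (exp (α / (α - 1))) ≤ 2 * exp (α / (α - 1)) * exp 1 / C ^ α := by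
  set γ₀ := exp (α / (α - 1))
  have hC0 : 0 < C := lt_of_lt_of_le (by positivity) hC
  have hpow : C ^ α = C ^ (α - 1) * C := by
    rw [← rpow_add_one hC0.ne']; ring_nf
  have hden : C ^ α / 2 ≤ C ^ (α - 1) * (C - γ₀ * lam) := by
    rw [hpow]
    have : 0 < C ^ (α - 1) := by positivity
    nlinarith [show 0 < γ₀ * lam by positivity]
  unfold capacityObjective
  rw [exp_div_sub_one_rpow hα, log_exp, div_one]
  calc γ₀ / (C ^ (α - 1) * (C - γ₀ * lam)) * exp 1 ≤ γ₀ / (C ^ α / 2) * exp 1 := by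
        gcongr
    _ = 2 * γ₀ * exp 1 / C ^ α := by ring

lemma mul_rpow_neg_one_div_rpow {α s c : ℝ} (hα : 0 < α) (hs : 0 < s) (hc : 0 ≤ c) :
    (c * s ^ (-(1 / α))) ^ α = c ^ α / s := by
  rw [mul_rpow hc (by positivity), ← rpow_mul hs.le, neg_mul, one_div_mul_cancel hα.ne',
    rpow_neg_one, div_eq_mul_inv]

lemma mul_rpow_neg_one_div_le_iff {α s c C : ℝ} (hα : 0 < α) (hs : 0 < s) (hc : 0 ≤ c)
    (hC : 0 ≤ C) : c * s ^ (-(1 / α)) ≤ C ↔ c ^ α ≤ s * C ^ α := by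
  rw [← rpow_le_rpow_iff (by positivity) hC hα, mul_rpow_neg_one_div_rpow hα hs hc,
    div_le_iff₀' hs]

lemma le_mul_rpow_neg_one_div_iff {α s c C : ℝ} (hα : 0 < α) (hs : 0 < s) (hc : 0 ≤ c)
    (hC : 0 ≤ C) : C ≤ c * s ^ (-(1 / α)) ↔ s * C ^ α ≤ c ^ α := by
  rw [← rpow_le_rpow_iff hC (by positivity) hα, mul_rpow_neg_one_div_rpow hα hs hc,
    le_div_iff₀' hs]

lemma capacity_set_eq_image (lam α C : ℝ) :
    {v : ℝ | ∃ γ : ℝ, 1 < γ ∧ γ < C / lam ∧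
        v = γ / (C ^ (α - 1) * (C - γ * lam)) *
            (γ ^ ((α - 1) / α) / Real.log (γ ^ ((α - 1) / α)))} =
      capacityObjective lam α C '' Ioo 1 (C / lam) := by
  ext v
  simp [capacityObjective, and_assoc, eq_comm]

lemma inv_rpow_mem_lowerBounds_capacityObjective {lam α C : ℝ} (hlam : 0 < lam) (hα : 1 < α) :
    (C ^ α)⁻¹ ∈ lowerBounds (capacityObjective lam α C '' Ioo 1 (C / lam)) := by
  rintro _ ⟨γ, hγ, rfl⟩
  exact inv_rpow_le_capacityObjective hlam.le hα hγ.1 ((lt_div_iff₀ hlam).1 hγ.2)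

lemma inv_rpow_le_sInf_capacityObjective {lam α C : ℝ} (hlam : 0 < lam) (hα : 1 < α)
    (hC : lam < C) : (C ^ α)⁻¹ ≤ sInf (capacityObjective lam α C '' Ioo 1 (C / lam)) :=
  le_csInf ((nonempty_Ioo.2 ((one_lt_div hlam).2 hC)).image _)
    (inv_rpow_mem_lowerBounds_capacityObjective hlam hα)

lemma sInf_capacityObjective_le {lam α C : ℝ} (hlam : 0 < lam) (hα : 1 < α)
    (hC : 2 * exp (α / (α - 1)) * lam ≤ C) :
    sInf (capacityObjective lam α C '' Ioo 1 (C / lam)) ≤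
      2 * exp (α / (α - 1)) * exp 1 / C ^ α := by
  have hγ₀ : 1 < exp (α / (α - 1)) := one_lt_exp_iff.2 (div_pos (by linarith) (by linarith))
  have hmem : exp (α / (α - 1)) ∈ Ioo 1 (C / lam) :=
    ⟨hγ₀, (lt_div_iff₀ hlam).2 (by nlinarith [mul_pos (sub_pos.2 hγ₀) hlam])⟩
  exact (csInf_le ⟨_, inv_rpow_mem_lowerBounds_capacityObjective hlam hα⟩
    (mem_image_of_mem _ hmem)).trans (capacityObjective_exp_le hlam hα hC)

/-- Scaling law for the heavy-tailed capacity: if `C(D̄,ε̄)` solves the implicit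
equation, then `C(D̄,ε̄) = Θ((ε̄D̄^{α-1})^{-1/α})` as `ε̄D̄^{α-1} → 0`. -/
theorem heavy_tailed_capacity_scaling (lam α : ℝ) (hlam : 0 < lam)
    (hα : α ∈ Set.Ioo (1 : ℝ) 2) :
    ∃ c₁ c₂ δ : ℝ, 0 < c₁ ∧ c₁ ≤ c₂ ∧ 0 < δ ∧
      ∀ D eps C : ℝ, 0 < D → 0 < eps → lam < C →
        (sInf {v : ℝ | ∃ γ : ℝ, 1 < γ ∧ γ < C / lam ∧
            v = γ / (C ^ (α - 1) * (C - γ * lam)) *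
                (γ ^ ((α - 1) / α) / Real.log (γ ^ ((α - 1) / α)))}
          = eps * D ^ (α - 1)) →
        eps * D ^ (α - 1) ≤ δ →
        c₁ * (eps * D ^ (α - 1)) ^ (-(1 / α)) ≤ C ∧
          C ≤ c₂ * (eps * D ^ (α - 1)) ^ (-(1 / α)) := by
  obtain ⟨hα1, -⟩ := hα
  have hα0 : 0 < α := by linarith
  set K := 2 * exp (α / (α - 1)) * exp 1
  set M := max 1 (2 * exp (α / (α - 1)) * lam)
  have hK : 1 ≤ K := by
    have := add_one_le_exp (α / (α - 1)); have := add_one_le_exp 1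
    nlinarith [div_pos hα0 (sub_pos.2 hα1)]
  refine ⟨1, K ^ α⁻¹, M ^ (-α), one_pos, one_le_rpow hK (by positivity), by positivity, ?_⟩
  intro D eps C hD heps hC hinf hδ
  set s := eps * D ^ (α - 1)
  have hs : 0 < s := by positivity
  have hC0 : 0 < C := hlam.trans hC
  rw [capacity_set_eq_image] at hinf
  have hlow : 1 ≤ s * C ^ α := (inv_le_iff_one_le_mul₀ (by positivity)).1
    (hinf ▸ inv_rpow_le_sInf_capacityObjective hlam hα1 hC)
  have hMC : M ≤ C := by
    have := (mul_rpow_neg_one_div_le_iff hα0 (by positivity : 0 < M ^ (-α)) zero_le_one hC0.le).2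
      (by rw [one_rpow]; exact hlow.trans (by gcongr))
    rwa [← rpow_mul (by positivity), neg_mul_neg, mul_one_div_cancel hα0.ne', rpow_one,
      one_mul] at this
  have hup : s ≤ K / C ^ α :=
    hinf ▸ sInf_capacityObjective_le hlam hα1 ((le_max_right _ _).trans hMC)
  constructor
  · simpa using (mul_rpow_neg_one_div_le_iff hα0 hs zero_le_one hC0.le).2 (by simpa using hlow)
  · refine (le_mul_rpow_neg_one_div_iff hα0 hs (by positivity) hC0.le).2 ?_
    rwa [← rpow_mul (by positivity), inv_mul_cancel₀ hα0.ne', rpow_one,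
      ← le_div_iff₀ (by positivity)]
end

section
/- For a discrete-time Poisson arrival process with rate λ served at constant rate C with λ(e^θ - 1)/θ ≤ C for some θ > 0, the transient virtual delay satisfies P(D(t) > D̄) ≤ e^{-θ C D̄} for all t ≥ 0, where D(t) = inf{d : A(t-d) ≤ R(t)} and R(t) ≥ inf_{0≤s≤t}(A(s) + C(t-s)). -/
/-!
Put `Y i = exp (θ (A (i+1) - A i - C))`. By the Poisson MGF and the stability condition the
`Y i` are independent with `E[Y i] ≤ 1`, so the backward products
`∏_{s ≤ i < u} Y i = exp (θ (A u - A s - C (u - s)))` form, in reversed time, a nonnegative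
supermartingale. If the delay at `t` exceeds `D`, the service guarantee produces some
`s < u := t - D` with `A u - A s > C (u - s) + C D`, i.e. a backward product above `exp (θ C D)`.
Ville's maximal inequality (optional stopping at the first such time, then Markov) bounds the
probability of this by `exp (-θ C D)`.
-/

open MeasureTheory ProbabilityTheory Finset

namespace MeasureTheory

variable {Ω : Type*} {m0 : MeasurableSpace Ω} {μ : Measure Ω}

theorem Supermartingale.ville_ineq [IsFiniteMeasure μ] {𝒢 : Filtration ℕ m0} {f : ℕ → Ω → ℝ}
    (hf : Supermartingale f 𝒢 μ) (hnonneg : 0 ≤ f) {ε : ℝ} (hε : 0 < ε) (n : ℕ) :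
    μ {ω | ∃ k ≤ n, ε ≤ f k ω} ≤ ENNReal.ofReal (μ[f 0] / ε) := by
  set τ : Ω → ℕ∞ := fun ω ↦ (hittingBtwn f {y | ε ≤ y} 0 n ω : ℕ)
  have hτ : IsStoppingTime 𝒢 τ :=
    hf.stronglyAdapted.adapted.isStoppingTime_hittingBtwn measurableSet_Ici
  have hτ_le : ∀ ω, τ ω ≤ n := fun ω ↦ Nat.cast_le.mpr (hittingBtwn_le ω)
  have hstopped : μ[stoppedValue f τ] ≤ μ[f 0] := by
    simpa [stoppedValue, integral_neg] using
      hf.neg.expected_stoppedValue_mono (isStoppingTime_const 𝒢 0) hτ (fun _ ↦ zero_le) hτ_le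
  have hsub : {ω | ∃ k ≤ n, ε ≤ f k ω} ⊆ {ω | ε ≤ stoppedValue f τ ω} :=
    fun ω ⟨k, hk, hεk⟩ ↦ stoppedValue_hittingBtwn_mem ⟨k, ⟨Nat.zero_le k, hk⟩, hεk⟩
  have hmarkov : ε * μ.real {ω | ε ≤ stoppedValue f τ ω} ≤ μ[stoppedValue f τ] :=
    mul_meas_ge_le_integral_of_nonneg (ae_of_all _ fun ω ↦ hnonneg _ ω)
      (integrable_stoppedValue ℕ hτ hf.integrable hτ_le) ε
  rw [← ofReal_measureReal]
  refine ENNReal.ofReal_le_ofReal ((le_div_iff₀' hε).mpr ?_)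
  calc ε * μ.real {ω | ∃ k ≤ n, ε ≤ f k ω}
      ≤ ε * μ.real {ω | ε ≤ stoppedValue f τ ω} :=
        mul_le_mul_of_nonneg_left (measureReal_mono hsub) hε.le
    _ ≤ μ[f 0] := hmarkov.trans hstopped

theorem integrable_exp_mul_sub {X : Ω → ℝ} {θ c : ℝ} (C : ℝ)
    (hX : ∫ ω, Real.exp (θ * X ω) ∂μ = Real.exp c) :
    Integrable (fun ω ↦ Real.exp (θ * (X ω - C))) μ := by
  have hint : Integrable (fun ω ↦ Real.exp (θ * X ω)) μ :=
    .of_integral_ne_zero (hX ▸ (Real.exp_pos c).ne')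
  simpa [mul_sub, Real.exp_sub] using hint.div_const (Real.exp (θ * C))

theorem integral_exp_mul_sub_le_one {X : Ω → ℝ} {θ c C : ℝ}
    (hX : ∫ ω, Real.exp (θ * X ω) ∂μ = Real.exp c) (hc : c ≤ θ * C) :
    ∫ ω, Real.exp (θ * (X ω - C)) ∂μ ≤ 1 := by
  simp_rw [mul_sub, Real.exp_sub]
  rwa [integral_div, hX, div_le_one (Real.exp_pos _), Real.exp_le_exp]

end MeasureTheory

namespace ProbabilityTheory

variable {Ω : Type*} {m0 : MeasurableSpace Ω} {μ : Measure Ω}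

theorem iIndepFun.supermartingale_prod_range_succ {Z : ℕ → Ω → ℝ}
    (hZ : iIndepFun Z μ) (hmeas : ∀ i, StronglyMeasurable (Z i)) (hnonneg : ∀ i, 0 ≤ Z i)
    (hint : ∀ i, Integrable (Z i) μ) (hle : ∀ i, μ[Z i] ≤ 1) :
    Supermartingale (fun n ↦ ∏ i ∈ range (n + 1), Z i) (Filtration.natural Z hmeas) μ := by
  have := hZ.isProbabilityMeasure
  set 𝓕 := Filtration.natural Z hmeas
  have hprod_succ : ∀ n, ∏ i ∈ range (n + 1 + 1), Z i = (∏ i ∈ range (n + 1), Z i) * Z (n + 1) :=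
    fun n ↦ prod_range_succ _ _
  have hadapted : StronglyAdapted 𝓕 fun n ↦ ∏ i ∈ range (n + 1), Z i := fun n ↦
    Finset.stronglyMeasurable_prod _ fun i hi ↦ (Filtration.stronglyAdapted_natural hmeas i).mono
      (𝓕.mono (Nat.le_of_lt_succ (mem_range.mp hi)))
  have hintegrable : ∀ n, Integrable (∏ i ∈ range (n + 1), Z i) μ := by
    intro n
    induction n with
    | zero => simpa using hint 0
    | succ n ih =>
      rw [hprod_succ]
      exact (hZ.indepFun_finsetProd_of_notMem (fun i ↦ (hmeas i).measurable)
        (by simp)).integrable_mul ih (hint _)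
  refine supermartingale_nat hadapted hintegrable fun n ↦ ?_
  have hnonneg_prod : 0 ≤ ∏ i ∈ range (n + 1), Z i := prod_nonneg fun i _ ↦ hnonneg i
  rw [hprod_succ]
  filter_upwards [condExp_mul_of_stronglyMeasurable_left (hadapted n)
      (hprod_succ n ▸ hintegrable (n + 1)) (hint (n + 1)),
    hZ.condExp_natural_ae_eq_of_lt hmeas n.lt_succ_self] with ω hpull hindep
  rw [hpull, Pi.mul_apply, hindep]
  exact mul_le_of_le_one_right (hnonneg_prod ω) (hle _)

theorem iIndepFun.measure_exists_le_prod_Ico_le {Y : ℕ → Ω → ℝ}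
    (hY : iIndepFun Y μ) (hmeas : ∀ i, Measurable (Y i)) (hnonneg : ∀ i, 0 ≤ Y i)
    (hint : ∀ i, Integrable (Y i) μ) (hle : ∀ i, μ[Y i] ≤ 1) {a : ℝ} (ha : 0 < a) (u : ℕ) :
    μ {ω | ∃ s < u, a ≤ ∏ i ∈ Ico s u, Y i ω} ≤ ENNReal.ofReal (1 / a) := by
  have := hY.isProbabilityMeasure
  -- reversing time on `[0, u)` turns the backward products into a forward supermartingale
  set σ : ℕ → ℕ := fun k ↦ if k < u then u - 1 - k else k
  have hσ : σ.Injective := fun j k hjk ↦ by simp only [σ] at hjk; split_ifs at hjk <;> omega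
  set Z : ℕ → Ω → ℝ := fun k ↦ Y (σ k)
  have hZmeas : ∀ k, StronglyMeasurable (Z k) := fun k ↦ (hmeas _).stronglyMeasurable
  have hM := (hY.precomp hσ).supermartingale_prod_range_succ hZmeas (fun _ ↦ hnonneg _)
    (fun _ ↦ hint _) (fun _ ↦ hle _)
  have hreflect : ∀ s < u, ∀ ω, ∏ i ∈ Ico s u, Y i ω = (∏ k ∈ range (u - 1 - s + 1), Z k) ω := by
    intro s hs ω
    have h := prod_Ico_reflect (fun j ↦ Y j ω) 0 (m := u - 1 - s + 1) (n := u - 1) (by omega)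
    rw [show u - 1 + 1 - (u - 1 - s + 1) = s by omega, show u - 1 + 1 - 0 = u by omega] at h
    rw [← h, prod_apply, range_eq_Ico]
    refine prod_congr rfl fun k hk ↦ ?_
    simp only [Z, σ, if_pos (show k < u by simp at hk; omega)]
  calc μ {ω | ∃ s < u, a ≤ ∏ i ∈ Ico s u, Y i ω}
      ≤ μ {ω | ∃ n ≤ u - 1, a ≤ (∏ k ∈ range (n + 1), Z k) ω} := by
        refine measure_mono fun ω ⟨s, hs, hω⟩ ↦ ⟨u - 1 - s, by omega, ?_⟩
        rwa [← hreflect s hs]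
    _ ≤ ENNReal.ofReal (μ[∏ k ∈ range (0 + 1), Z k] / a) :=
        hM.ville_ineq (fun n ↦ prod_nonneg fun k _ ↦ hnonneg _) ha _
    _ ≤ ENNReal.ofReal (1 / a) := by
        gcongr
        simpa using hle (σ 0)

end ProbabilityTheory

theorem Real.prod_Ico_exp_mul_sub (f : ℕ → ℝ) (θ C : ℝ) {s u : ℕ} (h : s ≤ u) :
    ∏ i ∈ Ico s u, Real.exp (θ * (f (i + 1) - f i - C))
      = Real.exp (θ * (f u - f s - C * ((u : ℝ) - s))) := by
  rw [← Real.exp_sum]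
  congr 1
  set g : ℕ → ℝ := fun i ↦ θ * (f i - C * i)
  calc ∑ i ∈ Ico s u, θ * (f (i + 1) - f i - C)
      = ∑ i ∈ Ico s u, (g (i + 1) - g i) :=
        sum_congr rfl fun i _ ↦ by simp only [g]; push_cast; ring
    _ = g u - g s := sum_Ico_sub g h
    _ = θ * (f u - f s - C * ((u : ℝ) - s)) := by ring

theorem exists_lt_sub_of_iInf_le_of_lt {a : ℕ → ℝ} (ha : Monotone a) {C r : ℝ} (hC : 0 ≤ C)
    {t D : ℕ} (hr : ⨅ s : Fin (t + 1), (a s + C * ((t : ℝ) - (s : ℕ))) ≤ r)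
    (hlt : r < a (t - D)) : ∃ s < t - D, C * ((t : ℝ) - s) < a (t - D) - a s := by
  obtain ⟨s, hs⟩ := Finite.exists_min fun s : Fin (t + 1) ↦ a s + C * ((t : ℝ) - (s : ℕ))
  have hmin : a s + C * ((t : ℝ) - (s : ℕ)) ≤ r := (le_ciInf hs).trans hr
  have hst : ((s : ℕ) : ℝ) ≤ t := mod_cast Nat.lt_succ_iff.mp s.isLt
  have hCts : 0 ≤ C * ((t : ℝ) - (s : ℕ)) := mul_nonneg hC (sub_nonneg.mpr hst)
  refine ⟨s, lt_of_not_ge fun hge ↦ ?_, by linarith⟩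
  linarith [ha hge]

theorem poisson_transient_delay_bound_general
    {Ω : Type*} {m : MeasurableSpace Ω} (P : Measure Ω) [IsProbabilityMeasure P]
    (A : ℕ → Ω → ℝ) (R : ℕ → Ω → ℝ) (lam C θ : ℝ)
    (hC : 0 < C) (hθ : 0 < θ)
    (hstab : lam * (Real.exp θ - 1) / θ ≤ C)
    (hAmono : ∀ ω, Monotone fun s => A s ω)
    (hAmeas : ∀ s, Measurable (A s))
    -- increments over unit slots are independent
    (hindep : iIndepFun
      (fun i ω => A (i + 1) ω - A i ω) P)
    -- each increment over an interval of length u has the Poisson(λu) MGF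
    (hMGF : ∀ s u : ℕ, ∀ θ' : ℝ,
      ∫ ω, Real.exp (θ' * (A (s + u) ω - A s ω)) ∂P
        = Real.exp (lam * u * (Real.exp θ' - 1)))
    -- the server guarantees the service process `S(s,t) = C(t-s)`
    (hservice : ∀ t : ℕ, ∀ ω, (⨅ s : Fin (t + 1), (A s ω + C * ((t : ℝ) - (s : ℕ)))) ≤ R t ω) :
    ∀ t D : ℕ,
      P {ω | ∀ d : ℕ, d ≤ D → R t ω < A (t - d) ω}
        ≤ ENNReal.ofReal (Real.exp (-(θ * C * D))) := by
  intro t D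
  have hdrift : lam * (Real.exp θ - 1) ≤ θ * C := by rwa [div_le_iff₀ hθ, mul_comm C] at hstab
  set Y : ℕ → Ω → ℝ := fun i ω ↦ Real.exp (θ * (A (i + 1) ω - A i ω - C))
  have hslot : ∀ i, ∫ ω, Real.exp (θ * (A (i + 1) ω - A i ω)) ∂P
      = Real.exp (lam * (Real.exp θ - 1)) := fun i ↦ by simpa using hMGF i 1 θ
  have hY_indep : iIndepFun Y P :=
    hindep.comp (fun _ x ↦ Real.exp (θ * (x - C))) fun _ ↦ by fun_prop
  have hY_meas : ∀ i, Measurable (Y i) := fun i ↦ by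
    have := hAmeas i; have := hAmeas (i + 1); fun_prop
  have hsub : {ω | ∀ d : ℕ, d ≤ D → R t ω < A (t - d) ω}
      ⊆ {ω | ∃ s < t - D, Real.exp (θ * C * D) ≤ ∏ i ∈ Ico s (t - D), Y i ω} := by
    intro ω hω
    obtain ⟨s, hs, hgt⟩ :=
      exists_lt_sub_of_iInf_le_of_lt (hAmono ω) hC.le (hservice t ω) (hω D le_rfl)
    refine ⟨s, hs, ?_⟩
    rw [Real.prod_Ico_exp_mul_sub (A · ω) θ C hs.le, Real.exp_le_exp, Nat.cast_sub (by omega)]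
    nlinarith
  calc P {ω | ∀ d : ℕ, d ≤ D → R t ω < A (t - d) ω}
      ≤ P {ω | ∃ s < t - D, Real.exp (θ * C * D) ≤ ∏ i ∈ Ico s (t - D), Y i ω} :=
        measure_mono hsub
    _ ≤ ENNReal.ofReal (1 / Real.exp (θ * C * D)) :=
        hY_indep.measure_exists_le_prod_Ico_le hY_meas (fun _ _ ↦ (Real.exp_pos _).le)
          (fun i ↦ integrable_exp_mul_sub C (hslot i))
          (fun i ↦ integral_exp_mul_sub_le_one (hslot i) hdrift) (Real.exp_pos _) _
    _ = ENNReal.ofReal (Real.exp (-(θ * C * D))) := by rw [one_div, Real.exp_neg]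

/-- Transient delay bound for a discrete-time Poisson arrival process with
rate `λ` served at constant rate `C`: if `λ(e^θ-1)/θ ≤ C` for some `θ > 0`,
then `P(D(t) > D̄) ≤ e^{-θCD̄}`, where the event `{D(t) > D̄}` (for the virtual
delay `D(t) = inf{d : A(t-d) ≤ R(t)}`) is `{ω | ∀ d ≤ D̄, R t ω < A (t-d) ω}`. -/
theorem poisson_transient_delay_bound
    {Ω : Type*} {m : MeasurableSpace Ω} (P : Measure Ω) [IsProbabilityMeasure P]
    (A : ℕ → Ω → ℝ) (R : ℕ → Ω → ℝ) (lam C θ : ℝ)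
    (hlam : 0 < lam) (hC : 0 < C) (hθ : 0 < θ)
    (hstab : lam * (Real.exp θ - 1) / θ ≤ C)
    (hA0 : ∀ ω, A 0 ω = 0)
    (hAmono : ∀ ω, Monotone fun s => A s ω)
    (hAmeas : ∀ s, Measurable (A s))
    (hRmeas : ∀ t, Measurable (R t))
    -- increments over unit slots are independent
    (hindep : iIndepFun
      (fun i ω => A (i + 1) ω - A i ω) P)
    -- each increment over an interval of length u has the Poisson(λu) MGF
    (hMGF : ∀ s u : ℕ, ∀ θ' : ℝ,
      ∫ ω, Real.exp (θ' * (A (s + u) ω - A s ω)) ∂P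
        = Real.exp (lam * u * (Real.exp θ' - 1)))
    -- the server guarantees the service process `S(s,t) = C(t-s)`
    (hservice : ∀ t : ℕ, ∀ ω, (⨅ s : Fin (t + 1), (A s ω + C * ((t : ℝ) - (s : ℕ)))) ≤ R t ω) :
    ∀ t D : ℕ,
      P {ω | ∀ d : ℕ, d ≤ D → R t ω < A (t - d) ω}
        ≤ ENNReal.ofReal (Real.exp (-(θ * C * D))) :=
  poisson_transient_delay_bound_general (m := m) P A R lam C θ hC hθ hstab hAmono hAmeas hindep hMGF
    hservice
end
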